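/- Let G be a finitely generated solvable group of rank n and let g = (g_1,…,g_k) ∈ G^k with k ≥ n. Then g normally generates G if and only if its image under the abelianization homomorphism π_ab : G → G/[G,G] generates G/[G,G]. In particular, π_ab is normally coessential: every normally generating k-vector of G/[G,G] (equivalently, every generating k-vector, since G/[G,G] is abelian) lifts to a normally generating k-vector of G. -/

import Mathlib

set_option maxHeartbeats 1000000

lemma subsingleton_of_commutator_eq_top {G : Type*} [Group G] [Group.IsSolvable G]
    (h : commutator G = ⊤) : Subsingleton G := by
  obtain ⟨n, hn⟩ := Group.IsSolvable.solvable (G := G)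
  have key : ∀ m : ℕ, derivedSeries G m = ⊤ := by
    intro m
    induction m with
    | zero => rfl
    | succ m ih => rw [derivedSeries_succ, ih, ← commutator_def, h]
  rw [key n] at hn
  refine ⟨fun a b => ?_⟩
  have ha : a ∈ (⊥ : Subgroup G) := hn ▸ Subgroup.mem_top a
  have hb : b ∈ (⊥ : Subgroup G) := hn ▸ Subgroup.mem_top b
  rw [Subgroup.mem_bot] at ha hb
  rw [ha, hb]

lemma abelianization_of_surjective {G : Type*} [Group G] :
    Function.Surjective (Abelianization.of : G →* Abelianization G) :=
  fun y => Quotient.inductionOn' y fun x => ⟨x, rfl⟩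

lemma abelianization_ker_of {G : Type*} [Group G] :
    (Abelianization.of : G →* Abelianization G).ker = commutator G := by
  ext x
  exact QuotientGroup.eq_one_iff x

lemma normallyGenerates_iff_ab {G : Type*} [Group G] [Group.IsSolvable G]
    {k : ℕ} (g : Fin k → G) :
    Subgroup.normalClosure (Set.range g) = ⊤ ↔
      Subgroup.closure (Set.range fun i => Abelianization.of (g i)) = ⊤ := by
  have hsurj : Function.Surjective (Abelianization.of : G →* Abelianization G) :=
    abelianization_of_surjective
  have hmap : Subgroup.map Abelianization.of (Subgroup.normalClosure (Set.range g)) =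
      Subgroup.closure (Set.range fun i => Abelianization.of (g i)) := by
    rw [Subgroup.map_normalClosure _ _ hsurj]
    have : Abelianization.of '' Set.range g
        = Set.range fun i => Abelianization.of (g i) := by
      rw [← Set.range_comp]; rfl
    rw [this]
    refine le_antisymm (Subgroup.normalClosure_le_normal Subgroup.subset_closure)
      ((Subgroup.closure_le _).2 Subgroup.subset_normalClosure)
  constructor
  · intro h
    rw [← hmap, h]
    exact Subgroup.map_top_of_surjective _ hsurj
  · intro h
    set H := Subgroup.normalClosure (Set.range g) with hH
    have hHnormal : H.Normal := Subgroup.normalClosure_normal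
    have hsup : H ⊔ commutator G = ⊤ := by
      have := Subgroup.comap_map_eq (Abelianization.of) H
      rw [hmap, h, abelianization_ker_of] at this
      rw [← this, Subgroup.comap_top]
    -- pass to the quotient G ⧸ H
    have hcomm : commutator (G ⧸ H) = ⊤ := by
      have hmk : Function.Surjective (QuotientGroup.mk' H) :=
        QuotientGroup.mk'_surjective H
      have h1 : Subgroup.map (QuotientGroup.mk' H) (H ⊔ commutator G) = ⊤ := by
        rw [hsup]; exact Subgroup.map_top_of_surjective _ hmk
      rw [Subgroup.map_sup] at h1
      have h2 : Subgroup.map (QuotientGroup.mk' H) H = ⊥ := by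
        rw [eq_bot_iff]
        rintro x ⟨y, hy, rfl⟩
        simpa [QuotientGroup.eq_one_iff] using hy
      have h3 : Subgroup.map (QuotientGroup.mk' H) (commutator G) = commutator (G ⧸ H) := by
        rw [commutator_def, Subgroup.map_commutator,
          Subgroup.map_top_of_surjective _ hmk, commutator_def]
      rw [h2, h3, bot_sup_eq] at h1
      exact h1
    have : Subsingleton (G ⧸ H) := subsingleton_of_commutator_eq_top hcomm
    rw [eq_top_iff]
    intro x _
    have hx : (QuotientGroup.mk' H) x = 1 := Subsingleton.elim _ _
    rwa [← MonoidHom.mem_ker, QuotientGroup.ker_mk'] at hx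

/-- let `G` be a finitely generated solvable group of rank `n` and
`g ∈ G^k` with `k ≥ n`. Then `g` normally generates `G` iff its image under the
abelianization homomorphism generates `G/[G,G]`; in particular the abelianization
homomorphism is normally coessential: every generating `k`-vector of `G/[G,G]` lifts to a
normally generating `k`-vector of `G`. -/
theorem normallyGenerates_iff_abelianization_generates
    {G : Type*} [Group G] [Group.FG G] [Group.IsSolvable G]
    {n : ℕ} (hn : Group.rank G = n) {k : ℕ} (hk : n ≤ k) (g : Fin k → G) :
    (Subgroup.normalClosure (Set.range g) = ⊤ ↔
      Subgroup.closure (Set.range fun i => Abelianization.of (g i)) = ⊤) ∧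
    (∀ q : Fin k → Abelianization G, Subgroup.closure (Set.range q) = ⊤ →
      ∃ g' : Fin k → G, Subgroup.normalClosure (Set.range g') = ⊤ ∧
        ∀ i, Abelianization.of (g' i) = q i) := by
  refine ⟨normallyGenerates_iff_ab g, ?_⟩
  intro q hq
  choose g' hg' using fun i => abelianization_of_surjective (G := G) (q i)
  refine ⟨g', ?_, hg'⟩
  rw [normallyGenerates_iff_ab]
  have : (fun i => Abelianization.of (g' i)) = q := funext hg'
  rw [this, hq]
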